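/- Let (Z_r)_{r≥1} be a sequence in the formal power series ring ℚ[[t]], let U ∈ ℚ[[t]] be the multiplicative inverse of (1−t)², and suppose: (1−t)²·Z_1 = 1, (1−t)²·Z_2 = 1 + 3t², (1−t)²·Z_3 = 1 + 3t² + 4t³ + t⁴, and for every r ≥ 4, Z_r = Z_{r−1} + t²·(Z_{r−2} − Z_{r−3}) + (2t^r + 2t^{r+1})·U. Then for every r ≥ 2, (1−t)²·Z_r = 1 + 3t² + Σ_{i=3}^{r} ( (i+1)t^i + (i−2)t^{i+1} ). -/

import Mathlib

/-!
Multiplying the recursion by `(1 - t)²` clears `U`, and the first differences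
`Δ r = (1 - t)² (Z r - Z (r - 1))` then satisfy `Δ r = t² Δ (r - 2) + 2 tʳ + 2 tʳ⁺¹` for `r ≥ 4`.
From `Δ 2 = 3 t²` and `Δ 3 = 4 t³ + t⁴` a two-step induction gives
`Δ r = (r + 1) tʳ + (r - 2) tʳ⁺¹`, and summing the differences from `r = 3` yields the formula.
-/

open PowerSeries

theorem eq_add_mul_pow_of_recurrence {R : Type*} [CommRing R] (x : R) (D : ℕ → R)
    (h2 : D 2 = 3 * x ^ 2) (h3 : D 3 = 4 * x ^ 3 + x ^ 4)
    (hrec : ∀ n, 4 ≤ n → D n = x ^ 2 * D (n - 2) + 2 * x ^ n + 2 * x ^ (n + 1)) :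
    ∀ n, 2 ≤ n → D n = ((n : R) + 1) * x ^ n + ((n : R) - 2) * x ^ (n + 1) := by
  intro n hn
  induction n using Nat.strong_induction_on with
  | _ n ih =>
    match n, hn with
    | 2, _ => rw [h2]; push_cast; ring
    | 3, _ => rw [h3]; push_cast; ring
    | n + 4, _ =>
      rw [hrec (n + 4) (by omega), Nat.add_sub_assoc (by omega), ih (n + 2) (by omega) (by omega)]
      push_cast
      ring

theorem eq_add_sum_Icc_of_sub_pred {G : Type*} [AddCommGroup G] (W d : ℕ → G) (a : ℕ)
    (hd : ∀ i, a < i → W i - W (i - 1) = d i) :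
    ∀ r, a ≤ r → W r = W a + ∑ i ∈ Finset.Icc (a + 1) r, d i := by
  intro r hr
  induction r, hr using Nat.le_induction with
  | base => simp
  | succ r hr ih =>
    rw [Finset.sum_Icc_succ_top (by omega), ← add_assoc, ← ih, ← hd (r + 1) (by omega)]
    simp

/-- Recursion for the genus-2 generating functions implies the closed form. -/
theorem stmt_4 (Z : ℕ → PowerSeries ℚ) (U : PowerSeries ℚ)
    (hU : (1 - (X : PowerSeries ℚ)) ^ 2 * U = 1)
    (h1 : (1 - (X : PowerSeries ℚ)) ^ 2 * Z 1 = 1)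
    (h2 : (1 - (X : PowerSeries ℚ)) ^ 2 * Z 2 = 1 + 3 * X ^ 2)
    (h3 : (1 - (X : PowerSeries ℚ)) ^ 2 * Z 3 = 1 + 3 * X ^ 2 + 4 * X ^ 3 + X ^ 4)
    (hrec : ∀ r : ℕ, 4 ≤ r →
      Z r = Z (r - 1) + X ^ 2 * (Z (r - 2) - Z (r - 3))
            + (2 * X ^ r + 2 * X ^ (r + 1)) * U) :
    ∀ r : ℕ, 2 ≤ r →
      (1 - (X : PowerSeries ℚ)) ^ 2 * Z r =
        1 + 3 * X ^ 2
          + ∑ i ∈ Finset.Icc 3 r,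
              (PowerSeries.C ((i : ℚ) + 1) * X ^ i
                + PowerSeries.C ((i : ℚ) - 2) * X ^ (i + 1)) := by
  set W : ℕ → ℚ⟦X⟧ := fun r ↦ (1 - X) ^ 2 * Z r
  have hW : ∀ r, 4 ≤ r → W r - W (r - 1) =
      X ^ 2 * (W (r - 2) - W (r - 2 - 1)) + 2 * X ^ r + 2 * X ^ (r + 1) := by
    intro r hr
    simp only [W, hrec r hr, Nat.sub_sub]
    linear_combination (2 * (X : ℚ⟦X⟧) ^ r + 2 * X ^ (r + 1)) * hU
  have hΔ := eq_add_mul_pow_of_recurrence (X : ℚ⟦X⟧) (fun n ↦ W n - W (n - 1))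
    (by simp only [W, h1, h2]; ring) (by simp only [W, h2, h3]; ring) hW
  have hstep : ∀ i, 2 < i → W i - W (i - 1) =
      C ((i : ℚ) + 1) * X ^ i + C ((i : ℚ) - 2) * X ^ (i + 1) := by
    intro i hi
    simp only [hΔ i hi.le, map_add, map_sub, map_natCast, map_one, map_ofNat]
  intro r hr
  rw [← h2]
  exact eq_add_sum_Icc_of_sub_pred W _ 2 hstep r hr
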